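/- For the Bethe tree B_{d,k} with d ≥ 3 and k ≥ 1, the set of distinct eigenvalues of its adjacency matrix equals { 2√(d-1)·cos(hπ/(j+1)) : 1 ≤ h ≤ j ≤ k }. -/

import Mathlib

open Polynomial

/-- A rooted tree on the vertex set `Fin (n+1)`, encoded by a parent function:
the root is `0`, and every non-root vertex has a parent strictly smaller than
itself (which guarantees acyclicity and connectedness). -/
structure ParentTree (n : ℕ) where
  parent : Fin (n + 1) → Fin (n + 1)
  parent_lt : ∀ i : Fin (n + 1), i ≠ 0 → parent i < i
  parent_zero : parent 0 = 0

namespace ParentTree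

variable {n : ℕ}

/-- The set of children of a vertex. -/
def children (T : ParentTree n) (v : Fin (n + 1)) : Finset (Fin (n + 1)) :=
  Finset.univ.filter fun w => T.parent w = v ∧ w ≠ v

/-- The adjacency matrix of a rooted tree, with entries in `R`. -/
def adjMat (T : ParentTree n) (R : Type) [Zero R] [One R] :
    Matrix (Fin (n + 1)) (Fin (n + 1)) R :=
  Matrix.of fun i j => if i ≠ j ∧ (T.parent i = j ∨ T.parent j = i) then 1 else 0

/-- The degree of a vertex. -/
def deg (T : ParentTree n) (v : Fin (n + 1)) : ℕ :=
  (T.children v).card + if v = 0 then 0 else 1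

end ParentTree

/-!
Write `e = √(d - 1)` and an eigenvalue as `2 e y`. Along an eigenvector `f`, the eigenvalue
equations below a vertex `v` lying `j` levels above the leaves give
`e U_{j+1}(y) f(v) = U_j(y) f(parent v)`, with `U` the Chebyshev polynomials of the second kind.
So if no `U_j`, `1 ≤ j ≤ k`, vanishes at `y`, then `f` vanishes from the root downwards.
Conversely, if `U_j(y) = 0`, the function equal to `U_{m-1}(y) / e^m` at depth `m` of the subtree
of a vertex at level `k - j + 1` solves the eigenvalue equations except at the parent of that
vertex: for `j = k` take the whole tree, for `j < k` the difference of the functions on two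
sibling subtrees. The roots of `U_j` are the `cos (h π / (j + 1))`.
-/

open Matrix Real Chebyshev

theorem Matrix.isRoot_charpoly_iff_exists_mulVec_eq_smul {K ι : Type*} [Field K] [Fintype ι]
    [DecidableEq ι] (A : Matrix ι ι K) (μ : K) :
    A.charpoly.IsRoot μ ↔ ∃ v ≠ 0, A *ᵥ v = μ • v := by
  rw [← Matrix.charpoly_toLin', ← Module.End.hasEigenvalue_iff_isRoot_charpoly]
  constructor
  · intro h
    obtain ⟨v, hv, hv0⟩ := h.exists_hasEigenvector
    exact ⟨v, hv0, Module.End.mem_eigenspace_iff.mp hv⟩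
  · rintro ⟨v, hv0, hv⟩
    exact Module.End.hasEigenvalue_of_hasEigenvector (x := v)
      ⟨Module.End.mem_eigenspace_iff.mpr hv, hv0⟩

theorem Polynomial.Chebyshev.eval_U_real_eq_zero_iff {j : ℕ} {y : ℝ} :
    (U ℝ j).eval y = 0 ↔ ∃ h : ℕ, 1 ≤ h ∧ h ≤ j ∧ y = cos (h * π / (j + 1)) := by
  rw [← IsRoot.def, ← mem_roots (U_ne_zero ℝ j (by omega)), roots_U_real, Finset.mem_val,
    Finset.mem_image]
  constructor
  · rintro ⟨m, hm, rfl⟩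
    exact ⟨m + 1, by omega, Finset.mem_range.mp hm, by push_cast; rfl⟩
  · rintro ⟨h, h1, hj, rfl⟩
    exact ⟨h - 1, Finset.mem_range.mpr (by omega), by rw [Nat.cast_sub h1]; ring_nf⟩

namespace ParentTree

variable {n : ℕ} (T : ParentTree n)

theorem mem_children {v w : Fin (n + 1)} : w ∈ T.children v ↔ T.parent w = v ∧ w ≠ v := by
  simp [children]

theorem parent_le (v : Fin (n + 1)) : T.parent v ≤ v := by
  by_cases hv : v = 0
  · rw [hv, T.parent_zero]
  · exact (T.parent_lt v hv).le

theorem ne_zero_of_mem_children {v w : Fin (n + 1)} (hw : w ∈ T.children v) : w ≠ 0 := by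
  rintro rfl
  obtain ⟨h, hne⟩ := (T.mem_children).mp hw
  exact hne (T.parent_zero ▸ h)

theorem mem_children_parent {v : Fin (n + 1)} (hv : v ≠ 0) : v ∈ T.children (T.parent v) :=
  T.mem_children.mpr ⟨rfl, (T.parent_lt v hv).ne'⟩

theorem adjMat_apply (v w : Fin (n + 1)) :
    T.adjMat ℝ v w =
      (if w ∈ T.children v then 1 else 0) + if v ≠ 0 ∧ w = T.parent v then 1 else 0 := by
  have hv := T.parent_lt v
  have hw := T.parent_lt w
  have h0 := T.parent_zero
  simp only [adjMat, of_apply, mem_children]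
  split_ifs <;> grind

theorem mulVec_adjMat_apply (f : Fin (n + 1) → ℝ) (v : Fin (n + 1)) :
    (T.adjMat ℝ *ᵥ f) v = ∑ w ∈ T.children v, f w + if v = 0 then 0 else f (T.parent v) := by
  simp only [mulVec, dotProduct, adjMat_apply, add_mul, Finset.sum_add_distrib, ite_mul, one_mul,
    zero_mul, Finset.sum_ite_mem, Finset.univ_inter]
  by_cases hv : v = 0 <;> simp [hv]

def IsAncestor (c v : Fin (n + 1)) : Prop := ∃ m, T.parent^[m] v = c

variable {T}

theorem isAncestor_refl (c : Fin (n + 1)) : T.IsAncestor c c := ⟨0, rfl⟩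

theorem IsAncestor.le {c v : Fin (n + 1)} (h : T.IsAncestor c v) : c ≤ v := by
  obtain ⟨m, rfl⟩ := h
  induction m with
  | zero => exact le_rfl
  | succ m ih => exact (Function.iterate_succ_apply' T.parent m v ▸ T.parent_le _).trans ih

theorem IsAncestor.of_mem_children {c v w : Fin (n + 1)} (h : T.IsAncestor c v)
    (hw : w ∈ T.children v) : T.IsAncestor c w := by
  obtain ⟨m, hm⟩ := h
  exact ⟨m + 1, by rw [Function.iterate_succ_apply, (T.mem_children.mp hw).1, hm]⟩

theorem IsAncestor.parent {c v : Fin (n + 1)} (h : T.IsAncestor c v) (hv : v ≠ c) :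
    T.IsAncestor c (T.parent v) := by
  obtain ⟨_ | m, hm⟩ := h
  · exact absurd hm hv
  · exact ⟨m, hm⟩

theorem not_isAncestor_parent {c : Fin (n + 1)} (hc : c ≠ 0) : ¬T.IsAncestor c (T.parent c) :=
  fun h => (T.parent_lt c hc).not_ge h.le

/-- Takes the value `a m` at depth `m` of the subtree rooted at `c` (where `c` has depth `1`) and
vanishes outside that subtree. -/
noncomputable def subtreeVec (lvl : Fin (n + 1) → ℕ) (a : ℕ → ℝ) (c : Fin (n + 1)) :
    Fin (n + 1) → ℝ :=
  open Classical in fun v => if T.IsAncestor c v then a (lvl v + 1 - lvl c) else 0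

theorem subtreeVec_of_mem_children_of_not_isAncestor {lvl : Fin (n + 1) → ℕ} {a : ℕ → ℝ}
    {c v w : Fin (n + 1)}
    (hv : ¬T.IsAncestor c v) (hw : w ∈ T.children v) :
    T.subtreeVec lvl a c w = if w = c then a 1 else 0 := by
  by_cases hwc : w = c
  · subst hwc
    rw [subtreeVec, if_pos (isAncestor_refl w), if_pos rfl, Nat.add_sub_cancel_left]
  · rw [subtreeVec, if_neg hwc, if_neg]
    exact fun h => hv ((T.mem_children.mp hw).1 ▸ h.parent hwc)

/-- `lvl` exhibits `T` as the Bethe tree `B_{b+1,k}`. -/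
structure IsBethe (T : ParentTree n) (lvl : Fin (n + 1) → ℕ) (b k : ℕ) : Prop where
  lvl_zero : lvl 0 = 1
  lvl_eq_lvl_parent_add_one : ∀ v, v ≠ 0 → lvl v = lvl (T.parent v) + 1
  lvl_le : ∀ v, lvl v ≤ k
  card_children_of_lt : ∀ v, lvl v < k → (T.children v).card = b
  card_children_of_eq : ∀ v, lvl v = k → (T.children v).card = 0

namespace IsBethe

variable {lvl : Fin (n + 1) → ℕ} {b k : ℕ}

theorem one_le_lvl (hT : T.IsBethe lvl b k) (v : Fin (n + 1)) : 1 ≤ lvl v := by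
  by_cases hv : v = 0
  · rw [hv, hT.lvl_zero]
  · rw [hT.lvl_eq_lvl_parent_add_one v hv]
    omega

theorem lvl_of_mem_children (hT : T.IsBethe lvl b k) {v w : Fin (n + 1)}
    (hw : w ∈ T.children v) : lvl w = lvl v + 1 := by
  rw [hT.lvl_eq_lvl_parent_add_one w (T.ne_zero_of_mem_children hw), (T.mem_children.mp hw).1]

theorem exists_lvl_eq (hT : T.IsBethe lvl b k) (hb : b ≠ 0) {ℓ : ℕ} (hℓ : 1 ≤ ℓ)
    (hℓk : ℓ ≤ k) : ∃ v, lvl v = ℓ := by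
  induction ℓ, hℓ using Nat.le_induction with
  | base => exact ⟨0, hT.lvl_zero⟩
  | succ ℓ _ ih =>
    obtain ⟨v, rfl⟩ := ih (by omega)
    obtain ⟨w, hw⟩ : (T.children v).Nonempty := by
      rw [← Finset.card_pos, hT.card_children_of_lt v (by omega)]
      omega
    exact ⟨w, hT.lvl_of_mem_children hw⟩

theorem lvl_parent_le (hT : T.IsBethe lvl b k) (v : Fin (n + 1)) : lvl (T.parent v) ≤ lvl v := by
  by_cases hv : v = 0
  · rw [hv, T.parent_zero]
  · rw [hT.lvl_eq_lvl_parent_add_one v hv]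
    omega

theorem lvl_le_of_isAncestor (hT : T.IsBethe lvl b k) {c v : Fin (n + 1)}
    (h : T.IsAncestor c v) : lvl c ≤ lvl v := by
  obtain ⟨m, rfl⟩ := h
  induction m generalizing v with
  | zero => exact le_rfl
  | succ m ih => exact (Function.iterate_succ_apply T.parent m v ▸ ih).trans (hT.lvl_parent_le v)

variable {e y : ℝ} {f : Fin (n + 1) → ℝ}

theorem mul_eval_U_succ_mul_eq (hT : T.IsBethe lvl b k) (he : e ≠ 0) (he2 : e ^ 2 = b)
    (hf : T.adjMat ℝ *ᵥ f = (2 * e * y) • f) (j : ℕ) (v : Fin (n + 1)) (hv : lvl v + j = k) :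
    e * (U ℝ (j + 1)).eval y * f v = (U ℝ j).eval y * if v = 0 then 0 else f (T.parent v) := by
  have hfv (v : Fin (n + 1)) :
      ∑ w ∈ T.children v, f w + (if v = 0 then 0 else f (T.parent v)) = 2 * e * y * f v := by
    rw [← T.mulVec_adjMat_apply, hf, Pi.smul_apply, smul_eq_mul]
  induction j generalizing v with
  | zero =>
    have hleaf := Finset.card_eq_zero.mp (hT.card_children_of_eq v (by omega))
    have := hfv v
    rw [hleaf, Finset.sum_empty, zero_add] at this
    rw [this, Nat.cast_zero, zero_add, U_one, U_zero]
    simp only [eval_mul, eval_X, eval_one, eval_ofNat]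
    ring
  | succ j ih =>
    have hsum : e * (U ℝ (j + 1)).eval y * ∑ w ∈ T.children v, f w = b * (U ℝ j).eval y * f v := by
      rw [Finset.mul_sum, Finset.sum_congr rfl fun w hw => ?_, Finset.sum_const,
        hT.card_children_of_lt v (by omega), nsmul_eq_mul, mul_assoc]
      rw [ih w (by rw [hT.lvl_of_mem_children hw]; omega), if_neg (T.ne_zero_of_mem_children hw),
        (T.mem_children.mp hw).1]
    have hrec : (U ℝ ((j + 1 : ℕ) + 1)).eval y = 2 * y * (U ℝ (j + 1)).eval y - (U ℝ j).eval y := by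
      rw [Nat.cast_succ, add_assoc, one_add_one_eq_two, U_add_two]
      simp
    rw [hrec]
    push_cast
    apply mul_left_cancel₀ he
    linear_combination (-(e * eval y (U ℝ (j + 1)))) * hfv v + hsum - eval y (U ℝ j) * f v * he2

theorem eq_zero_of_forall_eval_U_ne_zero (hT : T.IsBethe lvl b k) (he : e ≠ 0) (he2 : e ^ 2 = b)
    (hf : T.adjMat ℝ *ᵥ f = (2 * e * y) • f) (hU : ∀ j, 1 ≤ j → j ≤ k → (U ℝ j).eval y ≠ 0) :
    f = 0 := by
  funext v
  induction v using WellFoundedLT.induction with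
  | _ v ih =>
  have hparent : (if v = 0 then 0 else f (T.parent v)) = 0 := by
    split_ifs with hv
    · rfl
    · exact ih _ (T.parent_lt v hv)
  have h := hT.mul_eval_U_succ_mul_eq he he2 hf (k - lvl v) v (by have := hT.lvl_le v; omega)
  rw [hparent, mul_zero] at h
  have hUv : (U ℝ (k - lvl v + 1 : ℕ)).eval y ≠ 0 :=
    hU _ (by omega) (by have := hT.one_le_lvl v; have := hT.lvl_le v; omega)
  push_cast at hUv
  exact (mul_eq_zero.mp h).resolve_left (mul_ne_zero he hUv)

variable {a : ℕ → ℝ} {x : ℝ} {c : Fin (n + 1)}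

theorem sum_children_subtreeVec_of_isAncestor (hT : T.IsBethe lvl b k) (hc : a (k + 2 - lvl c) = 0)
    {v : Fin (n + 1)} (hv : T.IsAncestor c v) :
    ∑ w ∈ T.children v, T.subtreeVec lvl a c w = b * a (lvl v + 2 - lvl c) := by
  rw [Finset.sum_congr rfl fun w hw => by
      rw [subtreeVec, if_pos (hv.of_mem_children hw), hT.lvl_of_mem_children hw],
    Finset.sum_const, nsmul_eq_mul]
  rcases (hT.lvl_le v).lt_or_eq with hlt | heq
  · rw [hT.card_children_of_lt v hlt]
  · rw [hT.card_children_of_eq v heq, heq, hc]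
    simp

theorem ite_subtreeVec_parent_of_isAncestor (hT : T.IsBethe lvl b k) (ha0 : a 0 = 0)
    {v : Fin (n + 1)} (hv : T.IsAncestor c v) :
    (if v = 0 then 0 else T.subtreeVec lvl a c (T.parent v)) = a (lvl v - lvl c) := by
  by_cases hvc : v = c
  · subst hvc
    rw [Nat.sub_self, ha0]
    split_ifs with hv0
    · rfl
    · exact if_neg (not_isAncestor_parent hv0)
  · have hv0 : v ≠ 0 := fun h => hvc (le_antisymm (h ▸ Fin.zero_le c) hv.le)
    rw [if_neg hv0, subtreeVec, if_pos (hv.parent hvc), hT.lvl_eq_lvl_parent_add_one v hv0]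

theorem mulVec_subtreeVec_apply (hT : T.IsBethe lvl b k) (ha0 : a 0 = 0)
    (ha : ∀ i, x * a (i + 1) = a i + b * a (i + 2)) (hc : a (k + 2 - lvl c) = 0)
    (v : Fin (n + 1)) :
    (T.adjMat ℝ *ᵥ T.subtreeVec lvl a c) v =
      x * T.subtreeVec lvl a c v + if c ∈ T.children v then a 1 else 0 := by
  rw [T.mulVec_adjMat_apply]
  by_cases hv : T.IsAncestor c v
  · have hcv : c ∉ T.children v := fun h =>
      not_isAncestor_parent (T.ne_zero_of_mem_children h) ((T.mem_children.mp h).1 ▸ hv)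
    have := hT.lvl_le_of_isAncestor hv
    rw [hT.sum_children_subtreeVec_of_isAncestor hc hv,
      hT.ite_subtreeVec_parent_of_isAncestor ha0 hv, if_neg hcv, add_zero,
      subtreeVec, if_pos hv, show lvl v + 2 - lvl c = lvl v - lvl c + 2 by omega,
      show lvl v + 1 - lvl c = lvl v - lvl c + 1 by omega, ha]
    ring
  · have hparent : (if v = 0 then 0 else T.subtreeVec lvl a c (T.parent v)) = 0 := by
      split_ifs with hv0
      · rfl
      · exact if_neg fun h => hv (h.of_mem_children (T.mem_children_parent hv0))
    rw [Finset.sum_congr rfl fun w hw => T.subtreeVec_of_mem_children_of_not_isAncestor hv hw,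
      Finset.sum_ite_eq', hparent, add_zero, subtreeVec, if_neg hv, mul_zero, zero_add]

theorem exists_mulVec_eq_smul_of_recurrence (hT : T.IsBethe lvl b k) (hb : 2 ≤ b) (ha0 : a 0 = 0)
    (ha1 : a 1 ≠ 0) (ha : ∀ i, x * a (i + 1) = a i + b * a (i + 2)) {j : ℕ} (hj : 1 ≤ j)
    (hjk : j ≤ k) (haj : a (j + 1) = 0) : ∃ f ≠ 0, T.adjMat ℝ *ᵥ f = x • f := by
  rcases hjk.lt_or_eq with hjk | rfl
  · obtain ⟨u, hu⟩ := hT.exists_lvl_eq (by omega) (ℓ := k - j) (by omega) (by omega)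
    obtain ⟨c₁, hc₁, c₂, hc₂, hne⟩ := Finset.one_lt_card.mp
      (by rw [hT.card_children_of_lt u (by omega)]; omega)
    have hc {c} (hc : c ∈ T.children u) : a (k + 2 - lvl c) = 0 := by
      rw [hT.lvl_of_mem_children hc, hu, show k + 2 - (k - j + 1) = j + 1 by omega, haj]
    have hmem {c} (hc : c ∈ T.children u) (v : Fin (n + 1)) : c ∈ T.children v ↔ v = u :=
      ⟨fun h => (T.mem_children.mp h).1.symm.trans (T.mem_children.mp hc).1, fun h => h ▸ hc⟩
    have hc₂₁ : ¬T.IsAncestor c₂ c₁ := fun h =>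
      not_isAncestor_parent (T.ne_zero_of_mem_children hc₂)
        ((T.mem_children.mp hc₂).1 ▸ (T.mem_children.mp hc₁).1 ▸ h.parent hne)
    refine ⟨T.subtreeVec lvl a c₁ - T.subtreeVec lvl a c₂, fun h => ha1 ?_, funext fun v => ?_⟩
    · have := congrFun h c₁
      rwa [Pi.sub_apply, subtreeVec, if_pos (isAncestor_refl c₁), Nat.add_sub_cancel_left,
        subtreeVec, if_neg hc₂₁, sub_zero] at this
    · rw [mulVec_sub, Pi.sub_apply, hT.mulVec_subtreeVec_apply ha0 ha (hc hc₁),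
        hT.mulVec_subtreeVec_apply ha0 ha (hc hc₂)]
      simp only [hmem hc₁, hmem hc₂, Pi.smul_apply, Pi.sub_apply, smul_eq_mul]
      ring
  · refine ⟨T.subtreeVec lvl a 0, fun h => ha1 ?_, funext fun v => ?_⟩
    · have := congrFun h 0
      rwa [subtreeVec, if_pos (isAncestor_refl 0), Nat.add_sub_cancel_left] at this
    · rw [hT.mulVec_subtreeVec_apply ha0 ha (by rw [hT.lvl_zero]; exact haj),
        if_neg fun h => T.ne_zero_of_mem_children h rfl, add_zero, Pi.smul_apply, smul_eq_mul]

theorem exists_mulVec_eq_smul_of_eval_U_eq_zero (hT : T.IsBethe lvl b k) (hb : 2 ≤ b) (he : e ≠ 0)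
    (he2 : e ^ 2 = b) {j : ℕ} (hj : 1 ≤ j) (hjk : j ≤ k) (hU : (U ℝ j).eval y = 0) :
    ∃ f ≠ 0, T.adjMat ℝ *ᵥ f = (2 * e * y) • f := by
  refine hT.exists_mulVec_eq_smul_of_recurrence hb
    (a := fun i => (U ℝ ((i : ℤ) - 1)).eval y / e ^ i) (by simp) (by simp [he]) (fun i => ?_) hj hjk
    (by simp [hU])
  have h1 : ((i + 1 : ℕ) : ℤ) - 1 = i := by push_cast; ring
  have h2 : ((i + 2 : ℕ) : ℤ) - 1 = i + 1 := by push_cast; ring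
  simp only [h1, h2, U_add_one, ← he2]
  simp only [eval_sub, eval_mul, eval_ofNat, eval_X]
  field_simp
  ring

theorem isRoot_charpoly_iff (hT : T.IsBethe lvl b k) (hb : 2 ≤ b) (he : e ≠ 0) (he2 : e ^ 2 = b)
    (y : ℝ) :
    (T.adjMat ℝ).charpoly.IsRoot (2 * e * y) ↔ ∃ j, 1 ≤ j ∧ j ≤ k ∧ (U ℝ j).eval y = 0 := by
  rw [isRoot_charpoly_iff_exists_mulVec_eq_smul]
  constructor
  · rintro ⟨f, hf0, hf⟩
    by_contra! hU
    exact hf0 (hT.eq_zero_of_forall_eval_U_ne_zero he he2 hf hU)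
  · rintro ⟨j, hj, hjk, hU⟩
    exact hT.exists_mulVec_eq_smul_of_eval_U_eq_zero hb he he2 hj hjk hU

end IsBethe

end ParentTree

theorem stmt_12_general {n : ℕ} (T : ParentTree n)
    (lvl : Fin (n + 1) → ℕ)
    (hlvl0 : lvl 0 = 1)
    (hlvl : ∀ v, v ≠ 0 → lvl v = lvl (T.parent v) + 1)
    (d k : ℕ) (hd : 3 ≤ d)
    (hle : ∀ v, lvl v ≤ k)
    (hbethe : ∀ v, lvl v < k → (T.children v).card = d - 1)
    (hleaf : ∀ v, lvl v = k → (T.children v).card = 0) :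
    {x : ℝ | (T.adjMat ℝ).charpoly.IsRoot x} =
      {x : ℝ | ∃ h j : ℕ, 1 ≤ h ∧ h ≤ j ∧ j ≤ k ∧
        x = 2 * Real.sqrt ((d : ℝ) - 1) * Real.cos (h * Real.pi / (j + 1))} := by
  have hT : T.IsBethe lvl (d - 1) k := ⟨hlvl0, hlvl, hle, hbethe, hleaf⟩
  have hd2 : (2 : ℝ) ≤ d - 1 := by
    have : (3 : ℝ) ≤ d := by exact_mod_cast hd
    linarith
  set e := √((d : ℝ) - 1)
  have he : e ≠ 0 := (Real.sqrt_pos.mpr (by linarith)).ne'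
  have he2 : e ^ 2 = ((d - 1 : ℕ) : ℝ) := by
    rw [Real.sq_sqrt (by linarith), Nat.cast_sub (by omega), Nat.cast_one]
  ext x
  have hx : x = 2 * e * (x / (2 * e)) := by field_simp
  conv_lhs => rw [Set.mem_ofPred_eq, hx, hT.isRoot_charpoly_iff (by omega) he he2]
  simp only [Set.mem_ofPred_eq, eval_U_real_eq_zero_iff, div_eq_iff (mul_ne_zero two_ne_zero he)]
  constructor
  · rintro ⟨j, -, hjk, h, h1, hhj, hx⟩
    exact ⟨h, j, h1, hhj, hjk, by rw [hx]; ring⟩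
  · rintro ⟨h, j, h1, hhj, hjk, hx⟩
    exact ⟨j, by omega, hjk, h, h1, hhj, by rw [hx]; ring⟩

theorem stmt_12 {n : ℕ} (T : ParentTree n)
    (lvl : Fin (n + 1) → ℕ)
    (hlvl0 : lvl 0 = 1)
    (hlvl : ∀ v, v ≠ 0 → lvl v = lvl (T.parent v) + 1)
    (d k : ℕ) (hd : 3 ≤ d) (hk : 1 ≤ k)
    (hle : ∀ v, lvl v ≤ k)
    (hbethe : ∀ v, lvl v < k → (T.children v).card = d - 1)
    (hleaf : ∀ v, lvl v = k → (T.children v).card = 0) :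
    {x : ℝ | (T.adjMat ℝ).charpoly.IsRoot x} =
      {x : ℝ | ∃ h j : ℕ, 1 ≤ h ∧ h ≤ j ∧ j ≤ k ∧
        x = 2 * Real.sqrt ((d : ℝ) - 1) * Real.cos (h * Real.pi / (j + 1))} :=
  stmt_12_general T lvl hlvl0 hlvl d k hd hle hbethe hleaf
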